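/- arXiv:2112.14014 — 5 statements merged into one kernel-verified Lean document; each statement's English description precedes it below -/
import Mathlib

section
/- (Theorem 2, scaling invariance) Let A be a p×p complex matrix, b ∈ ℂ^p, h, h' ∈ ℝ nonzero, and λ, λ' ∈ ℂ nonzero with hλ = h'λ'. If α ∈ ℂ satisfies the learnability equation for step size h and parameter λ, namely det(I − hαA) ≠ 0 and 1 + hα·bᵀ(I − hαA)⁻¹𝟙 = e^{hλ}, then α' := (λ'/λ)·α satisfies the learnability equation for step size h' and parameter λ', and moreover α'/λ' = α/λ. Consequently the learnability coefficient |α/λ − 1| of the corresponding solution depends only on z = hλ. -/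
open Matrix

/-! The learnability equation depends on `α` and `h` only through the product `h α`, and on
`λ` only through `h λ`. Since `h' α' = h' λ' α / λ = h λ α / λ = h α`, both sides of the
equation are unchanged when `(h, λ, α)` is replaced by `(h', λ', α')`. -/

section ScalingField

variable {K : Type*} [Field K] {h h' l l' : K}

theorem mul_div_mul_eq_of_mul_eq (hl : l ≠ 0) (hz : h * l = h' * l') (a : K) :
    h' * (l' / l * a) = h * a := by
  field_simp
  linear_combination a * hz.symm

theorem div_mul_div_cancel_left_of_ne_zero (hl' : l' ≠ 0) (a : K) : l' / l * a / l' = a / l := by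
  field_simp

end ScalingField

theorem rk_learnability_scaling_invariance_general
    (p : ℕ) (A : Matrix (Fin p) (Fin p) ℂ) (b : Fin p → ℂ)
    (h h' : ℝ)
    (lam lam' : ℂ) (hlam : lam ≠ 0) (hlam' : lam' ≠ 0)
    (hz : (h : ℂ) * lam = (h' : ℂ) * lam')
    (α : ℂ)
    (hdet : IsUnit ((1 : Matrix (Fin p) (Fin p) ℂ) - ((h : ℂ) * α) • A).det)
    (heq : 1 + (h : ℂ) * α *
        (b ⬝ᵥ ((1 : Matrix (Fin p) (Fin p) ℂ) - ((h : ℂ) * α) • A)⁻¹.mulVec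
          (fun _ : Fin p => (1 : ℂ)))
      = Complex.exp ((h : ℂ) * lam)) :
    IsUnit ((1 : Matrix (Fin p) (Fin p) ℂ)
        - ((h' : ℂ) * (lam' / lam * α)) • A).det
    ∧ 1 + (h' : ℂ) * (lam' / lam * α) *
        (b ⬝ᵥ ((1 : Matrix (Fin p) (Fin p) ℂ)
            - ((h' : ℂ) * (lam' / lam * α)) • A)⁻¹.mulVec
          (fun _ : Fin p => (1 : ℂ)))
      = Complex.exp ((h' : ℂ) * lam')
    ∧ (lam' / lam * α) / lam' = α / lam
    ∧ ‖(lam' / lam * α) / lam' - 1‖ = ‖α / lam - 1‖ := by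
  rw [mul_div_mul_eq_of_mul_eq hlam hz, ← hz, div_mul_div_cancel_left_of_ne_zero hlam']
  exact ⟨hdet, heq, rfl, rfl⟩

/-- Theorem 2, scaling invariance: if `α` solves the learnability equation
for step size `h` and parameter `λ`, and `h λ = h' λ'`, then `α' = (λ'/λ) α` solves the
learnability equation for step size `h'` and parameter `λ'`, and `α'/λ' = α/λ`; hence the
learnability coefficient `|α/λ − 1|` depends only on `z = hλ`. -/
theorem rk_learnability_scaling_invariance
    (p : ℕ) (A : Matrix (Fin p) (Fin p) ℂ) (b : Fin p → ℂ)
    (h h' : ℝ) (hh : h ≠ 0) (hh' : h' ≠ 0)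
    (lam lam' : ℂ) (hlam : lam ≠ 0) (hlam' : lam' ≠ 0)
    (hz : (h : ℂ) * lam = (h' : ℂ) * lam')
    (α : ℂ)
    (hdet : IsUnit ((1 : Matrix (Fin p) (Fin p) ℂ) - ((h : ℂ) * α) • A).det)
    (heq : 1 + (h : ℂ) * α *
        (b ⬝ᵥ ((1 : Matrix (Fin p) (Fin p) ℂ) - ((h : ℂ) * α) • A)⁻¹.mulVec
          (fun _ : Fin p => (1 : ℂ)))
      = Complex.exp ((h : ℂ) * lam)) :
    IsUnit ((1 : Matrix (Fin p) (Fin p) ℂ)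
        - ((h' : ℂ) * (lam' / lam * α)) • A).det
    ∧ 1 + (h' : ℂ) * (lam' / lam * α) *
        (b ⬝ᵥ ((1 : Matrix (Fin p) (Fin p) ℂ)
            - ((h' : ℂ) * (lam' / lam * α)) • A)⁻¹.mulVec
          (fun _ : Fin p => (1 : ℂ)))
      = Complex.exp ((h' : ℂ) * lam')
    ∧ (lam' / lam * α) / lam' = α / lam
    ∧ ‖(lam' / lam * α) / lam' - 1‖ = ‖α / lam - 1‖ :=
  rk_learnability_scaling_invariance_general p A b h h' lam lam' hlam hlam' hz α hdet heq
end

section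
/- (Example: explicit midpoint, solution set) Let h ∈ ℝ, h ≠ 0, λ ∈ ℂ, and let w ∈ ℂ be any complex number with w² = 2e^{hλ} − 1. Then α ∈ ℂ satisfies 1 + hα + h²α²/2 = e^{hλ} if and only if α = (−1 + w)/h or α = (−1 − w)/h. In particular the learnability equation of the explicit midpoint method admits exactly these two solutions, so the learned linear model is not uniquely determined. -/
theorem one_add_mul_add_sq_div_two_eq_iff {K : Type*} [Field K] [NeZero (2 : K)]
    {h c w : K} (hh : h ≠ 0) (hw : w ^ 2 = 2 * c - 1) (α : K) :
    1 + h * α + h ^ 2 * α ^ 2 / 2 = c ↔ α = (-1 + w) / h ∨ α = (-1 - w) / h := by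
  have twice_lhs : 2 * (1 + h * α + h ^ 2 * α ^ 2 / 2) = (h * α + 1) ^ 2 + 1 := by
    field_simp
    ring
  have complete_square : 1 + h * α + h ^ 2 * α ^ 2 / 2 = c ↔ (h * α + 1) ^ 2 = w ^ 2 := by
    rw [← mul_right_inj' (NeZero.ne (2 : K)), twice_lhs, hw, eq_sub_iff_add_eq]
  rw [complete_square, sq_eq_sq_iff_eq_or_eq_neg, eq_div_iff hh, eq_div_iff hh]
  apply or_congr <;> constructor <;> intro heq <;> linear_combination heq

/-- example: explicit midpoint, solution set: for `h ≠ 0`, `λ ∈ ℂ` and any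
`w ∈ ℂ` with `w² = 2 e^{hλ} − 1`, the learnability equation of the explicit midpoint
method `1 + hα + h²α²/2 = e^{hλ}` holds iff `α = (−1 + w)/h` or `α = (−1 − w)/h`;
so the learned linear model is not uniquely determined. -/
theorem explicit_midpoint_solution_set
    (h : ℝ) (hh : h ≠ 0) (lam w : ℂ)
    (hw : w ^ 2 = 2 * Complex.exp ((h : ℂ) * lam) - 1) :
    ∀ α : ℂ,
      1 + (h : ℂ) * α + (h : ℂ) ^ 2 * α ^ 2 / 2 = Complex.exp ((h : ℂ) * lam)
        ↔ α = (-1 + w) / (h : ℂ) ∨ α = (-1 - w) / (h : ℂ) :=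
  one_add_mul_add_sq_div_two_eq_iff (Complex.ofReal_ne_zero.mpr hh) hw
end

section
/- (Example: explicit midpoint, the branch α₊ is a second-order approximation) Fix λ ∈ ℂ and for real h near 0 define α₊(h) = (−1 + (2e^{hλ} − 1)^{1/2})/h, where (·)^{1/2} denotes the principal complex square root. Then α₊(h) − λ − h²λ³/6 = O(h³) as h → 0; in particular α₊(h) − λ = O(h²), so α₊ is a second-order accurate approximation of λ. -/
open Filter Topology Asymptotics

/-!
Write `α = α₊(h)`. Squaring the principal root gives the learnability equation
`1 + hα + h²α²/2 = e^{hλ}`; subtracting the cubic Taylor polynomial of `e^{hλ}` turns it into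
`(α - λ)(1 + h(α + λ)/2) = h²λ³/6 + R(h)/h` with `R(h) = O(h⁴)`.
Since `α₊` is the difference quotient at `0` of the differentiable map `h ↦ (2e^{hλ} - 1)^{1/2}`,
`α → λ`, so the factor `1 + h(α + λ)/2` tends to `1` and `α - λ = O(h²)`. Then the correction
`(α - λ) · h(α + λ)/2` is `O(h³)`, which gives the sharper expansion. The argument runs for complex
`h` and restricts to real `h`.
-/

open Complex

noncomputable def midpointRoot (lam z : ℂ) : ℂ :=
  (2 * exp (z * lam) - 1) ^ ((1 : ℂ) / 2)

noncomputable def alphaPlus (lam z : ℂ) : ℂ :=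
  (-1 + midpointRoot lam z) / z

noncomputable def expMulTaylorRemainder (lam z : ℂ) : ℂ :=
  exp (z * lam) - (1 + z * lam + (z * lam) ^ 2 / 2 + (z * lam) ^ 3 / 6)

lemma Asymptotics.IsBigO.of_mul_eventuallyEq_of_tendsto {α 𝕜 : Type*} [NormedField 𝕜]
    {l : Filter α} {f g k : α → 𝕜} {c : 𝕜} (hfg : (fun x => f x * g x) =ᶠ[l] k)
    (hg : Tendsto g l (𝓝 c)) (hc : c ≠ 0) : f =O[l] k := by
  have hquot : (fun x => k x * (g x)⁻¹) =O[l] k :=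
    ((isBigO_refl k l).mul ((hg.inv₀ hc).isBigO_one 𝕜)).congr_right fun x => mul_one (k x)
  refine hquot.congr' ?_ EventuallyEq.rfl
  filter_upwards [hfg, hg.eventually_ne hc] with x hx hgx
  rw [← hx, mul_inv_cancel_right₀ hgx]

lemma hasDerivAt_midpointRoot (lam : ℂ) : HasDerivAt (midpointRoot lam) lam 0 := by
  unfold midpointRoot
  have hinner : HasDerivAt (fun z : ℂ => 2 * exp (z * lam) - 1) (2 * lam) 0 := by
    simpa using (((hasDerivAt_id (0 : ℂ)).mul_const lam).cexp.const_mul 2).sub_const 1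
  convert hinner.cpow_const (c := 1 / 2) (by norm_num [slitPlane]) using 1
  norm_num
  ring

lemma tendsto_alphaPlus (lam : ℂ) : Tendsto (alphaPlus lam) (𝓝[≠] 0) (𝓝 lam) := by
  refine (hasDerivAt_iff_tendsto_slope.mp (hasDerivAt_midpointRoot lam)).congr fun z => ?_
  norm_num [slope_def_module, alphaPlus, midpointRoot, div_eq_inv_mul, neg_add_eq_sub]

lemma alphaPlus_learnability (lam : ℂ) {z : ℂ} (hz : z ≠ 0) :
    1 + z * alphaPlus lam z + z ^ 2 * alphaPlus lam z ^ 2 / 2 = exp (z * lam) := by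
  have hsq : midpointRoot lam z ^ 2 = 2 * exp (z * lam) - 1 := by
    rw [midpointRoot, one_div]
    exact cpow_ofNat_inv_pow _ 2
  rw [alphaPlus]
  field_simp
  linear_combination hsq

lemma alphaPlus_sub_mul_eq (lam : ℂ) {z : ℂ} (hz : z ≠ 0) :
    (alphaPlus lam z - lam) * (1 + z * (alphaPlus lam z + lam) / 2)
      = z ^ 2 * lam ^ 3 / 6 + expMulTaylorRemainder lam z / z := by
  have hlearn := alphaPlus_learnability lam hz
  rw [expMulTaylorRemainder]
  generalize exp (z * lam) = e at hlearn ⊢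
  field_simp
  linear_combination 12 * hlearn

lemma expMulTaylorRemainder_isBigO (lam : ℂ) :
    expMulTaylorRemainder lam =O[𝓝 0] (· ^ 4) := by
  have htaylor := (exp_sub_sum_range_isBigO_pow 4).comp_tendsto
    (((continuous_id.mul continuous_const).tendsto' (0 : ℂ) 0 (zero_mul lam)))
  refine (htaylor.congr_left fun z => ?_).trans ?_
  · simp [expMulTaylorRemainder, Finset.sum_range_succ, Nat.factorial]
  · exact ((isBigO_refl (· ^ 4) _).const_mul_left (lam ^ 4)).congr_left
      fun z => by simp [mul_pow, mul_comm]

lemma expMulTaylorRemainder_div_isBigO (lam : ℂ) :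
    (fun z => expMulTaylorRemainder lam z / z) =O[𝓝[≠] 0] (· ^ 3) := by
  have h := ((expMulTaylorRemainder_isBigO lam).mono nhdsWithin_le_nhds).mul
    (isBigO_refl (fun z : ℂ => z⁻¹) (𝓝[≠] 0))
  refine h.congr' (Eventually.of_forall fun z => div_eq_mul_inv _ _) ?_
  filter_upwards [self_mem_nhdsWithin] with z hz
  field_simp [show z ≠ 0 from hz]

lemma alphaPlus_sub_isBigO_sq (lam : ℂ) :
    (fun z => alphaPlus lam z - lam) =O[𝓝[≠] 0] (· ^ 2) := by
  have hfactor : Tendsto (fun z => 1 + z * (alphaPlus lam z + lam) / 2) (𝓝[≠] 0) (𝓝 1) := by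
    have := (((tendsto_id.mono_left nhdsWithin_le_nhds).mul
      ((tendsto_alphaPlus lam).add_const lam)).div_const 2).const_add 1
    simpa using this
  have hrhs : (fun z => z ^ 2 * lam ^ 3 / 6 + expMulTaylorRemainder lam z / z)
      =O[𝓝[≠] 0] (· ^ 2) :=
    (((isBigO_refl _ _).const_mul_left (lam ^ 3 / 6)).congr_left fun z => by ring).add
      ((expMulTaylorRemainder_div_isBigO lam).trans
        ((isLittleO_pow_pow (by norm_num : 2 < 3)).isBigO.mono nhdsWithin_le_nhds))
  refine (IsBigO.of_mul_eventuallyEq_of_tendsto ?_ hfactor one_ne_zero).trans hrhs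
  filter_upwards [self_mem_nhdsWithin] with z hz using alphaPlus_sub_mul_eq lam hz

lemma alphaPlus_sub_sub_isBigO_cube (lam : ℂ) :
    (fun z => alphaPlus lam z - lam - z ^ 2 * lam ^ 3 / 6) =O[𝓝[≠] 0] (· ^ 3) := by
  have hbounded : (fun z => (alphaPlus lam z + lam) / 2) =O[𝓝[≠] 0] (fun _ => (1 : ℂ)) :=
    (((tendsto_alphaPlus lam).add_const lam).div_const 2).isBigO_one ℂ
  have hcorrection : (fun z => (alphaPlus lam z - lam) * (z * ((alphaPlus lam z + lam) / 2)))
      =O[𝓝[≠] 0] (· ^ 3) :=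
    ((alphaPlus_sub_isBigO_sq lam).mul ((isBigO_refl id _).mul hbounded)).congr_right
      fun z => by simp only [id, mul_one]; ring
  refine ((expMulTaylorRemainder_div_isBigO lam).sub hcorrection).congr' ?_ EventuallyEq.rfl
  filter_upwards [self_mem_nhdsWithin] with z hz
  linear_combination -alphaPlus_sub_mul_eq lam hz

/-- example: explicit midpoint, the branch `α₊` is a second-order
approximation: for fixed `λ ∈ ℂ`, with
`α₊(h) = (−1 + (2 e^{hλ} − 1)^{1/2})/h` (principal square root), we have
`α₊(h) − λ − h²λ³/6 = O(h³)` and `α₊(h) − λ = O(h²)` as `h → 0` through nonzero reals. -/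
theorem explicit_midpoint_alpha_plus_second_order (lam : ℂ) :
    (fun h : ℝ =>
        (-1 + (2 * Complex.exp ((h : ℂ) * lam) - 1) ^ ((1 : ℂ) / 2)) / (h : ℂ)
          - lam - (h : ℂ) ^ 2 * lam ^ 3 / 6)
      =O[𝓝[≠] (0 : ℝ)] (fun h : ℝ => h ^ 3)
    ∧ (fun h : ℝ =>
        (-1 + (2 * Complex.exp ((h : ℂ) * lam) - 1) ^ ((1 : ℂ) / 2)) / (h : ℂ)
          - lam)
      =O[𝓝[≠] (0 : ℝ)] (fun h : ℝ => h ^ 2) :=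
  ⟨isBigO_ofReal_right.mp <| by
      simpa only [alphaPlus, midpointRoot, ofReal_pow] using
        isBigO_comp_ofReal_nhds_ne (alphaPlus_sub_sub_isBigO_cube lam),
    isBigO_ofReal_right.mp <| by
      simpa only [alphaPlus, midpointRoot, ofReal_pow] using
        isBigO_comp_ofReal_nhds_ne (alphaPlus_sub_isBigO_sq lam)⟩
end

section
/- (Example: explicit midpoint, the branch α₋ is not an approximation of λ) Fix λ ∈ ℂ and for real h near 0, h ≠ 0, define α₋(h) = (−1 − (2e^{hλ} − 1)^{1/2})/h, where (·)^{1/2} denotes the principal complex square root. Then α₋(h) + 2/h converges to −λ as h → 0 (h ≠ 0); in particular h·α₋(h) → −2, so α₋(h) does not converge to λ and the corresponding learned model is completely different from the true dynamics. -/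
open Filter Topology

/-!
The square root branch `g(h) = (2 e^{hλ} - 1)^{1/2}` is differentiable at `0` with `g(0) = 1`
and `g'(0) = λ`. Since `α₋(h) + 2/h = -(g(h) - g(0))/h`, this difference quotient tends to `-λ`,
while `h α₋(h) = -1 - g(h) → -2 ≠ 0` rules out any finite limit of `α₋`.
-/

open Complex in
theorem hasDerivAt_cpow_half_two_mul_exp_sub_one (lam : ℂ) :
    HasDerivAt (fun z : ℂ => (2 * exp (z * lam) - 1) ^ ((1 : ℂ) / 2)) lam 0 := by
  have hinner : HasDerivAt (fun z : ℂ => 2 * exp (z * lam) - 1) (2 * lam) 0 := by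
    simpa using ((((hasDerivAt_id (0 : ℂ)).mul_const lam).cexp).const_mul 2).sub_const 1
  convert hinner.cpow_const (c := (1 : ℂ) / 2) (by norm_num) using 1
  norm_num
  ring

theorem tendsto_neg_one_sub_div_add_two_div {g : ℝ → ℂ} {d : ℂ} (hg : HasDerivAt g d 0)
    (hg0 : g 0 = 1) :
    Tendsto (fun h : ℝ => (-1 - g h) / (h : ℂ) + 2 / (h : ℂ)) (𝓝[≠] 0) (𝓝 (-d)) := by
  have hslope := (hasDerivAt_iff_tendsto_slope_zero.mp hg).neg
  refine hslope.congr' (eventually_mem_nhdsWithin.mono fun h (hh : h ≠ 0) => ?_)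
  have hh' : (h : ℂ) ≠ 0 := Complex.ofReal_ne_zero.mpr hh
  simp only [zero_add, hg0, Complex.real_smul, Complex.ofReal_inv]
  field_simp
  ring

theorem tendsto_ofReal_mul_div_ofReal {f : ℝ → ℂ} (hf : ContinuousAt f 0) :
    Tendsto (fun h : ℝ => (h : ℂ) * (f h / (h : ℂ))) (𝓝[≠] 0) (𝓝 (f 0)) := by
  refine (hf.tendsto.mono_left nhdsWithin_le_nhds).congr'
    (eventually_mem_nhdsWithin.mono fun h (hh : h ≠ 0) => ?_)
  exact (mul_div_cancel₀ _ (Complex.ofReal_ne_zero.mpr hh)).symm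

theorem not_tendsto_of_tendsto_ofReal_mul {f : ℝ → ℂ} {c : ℂ} (hc : c ≠ 0)
    (hf : Tendsto (fun h : ℝ => (h : ℂ) * f h) (𝓝[≠] 0) (𝓝 c)) (a : ℂ) :
    ¬ Tendsto f (𝓝[≠] 0) (𝓝 a) := by
  intro ha
  have hofReal : Tendsto (fun h : ℝ => (h : ℂ)) (𝓝[≠] 0) (𝓝 0) := by
    simpa using Complex.continuous_ofReal.tendsto 0 |>.mono_left nhdsWithin_le_nhds
  have hzero := hofReal.mul ha
  rw [zero_mul] at hzero
  exact hc (tendsto_nhds_unique hf hzero)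

/-- example: explicit midpoint, the branch `α₋` is not an approximation of
`λ`: for fixed `λ ∈ ℂ`, with `α₋(h) = (−1 − (2 e^{hλ} − 1)^{1/2})/h` (principal square
root), as `h → 0` through nonzero reals we have `α₋(h) + 2/h → −λ`, in particular
`h·α₋(h) → −2` and `α₋(h)` does not converge to `λ`. -/
theorem explicit_midpoint_alpha_minus_not_approximation (lam : ℂ) :
    Tendsto
      (fun h : ℝ =>
        (-1 - (2 * Complex.exp ((h : ℂ) * lam) - 1) ^ ((1 : ℂ) / 2)) / (h : ℂ)
          + 2 / (h : ℂ))
      (𝓝[≠] (0 : ℝ)) (𝓝 (-lam))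
    ∧ Tendsto
      (fun h : ℝ =>
        (h : ℂ) *
          ((-1 - (2 * Complex.exp ((h : ℂ) * lam) - 1) ^ ((1 : ℂ) / 2)) / (h : ℂ)))
      (𝓝[≠] (0 : ℝ)) (𝓝 (-2))
    ∧ ¬ Tendsto
      (fun h : ℝ =>
        (-1 - (2 * Complex.exp ((h : ℂ) * lam) - 1) ^ ((1 : ℂ) / 2)) / (h : ℂ))
      (𝓝[≠] (0 : ℝ)) (𝓝 lam) := by
  have hderiv : HasDerivAt
      (fun h : ℝ => (2 * Complex.exp ((h : ℂ) * lam) - 1) ^ ((1 : ℂ) / 2)) lam 0 :=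
    (hasDerivAt_cpow_half_two_mul_exp_sub_one lam).comp_ofReal
  have hone : (2 * Complex.exp (((0 : ℝ) : ℂ) * lam) - 1) ^ ((1 : ℂ) / 2) = 1 := by
    norm_num
  have hscaled := tendsto_ofReal_mul_div_ofReal (hderiv.continuousAt.const_sub (-1))
  rw [hone, show (-1 - 1 : ℂ) = -2 by norm_num] at hscaled
  exact ⟨tendsto_neg_one_sub_div_add_two_div hderiv hone, hscaled,
    not_tendsto_of_tendsto_ofReal_mul (by norm_num) hscaled lam⟩
end

section
/- (Existence of a solution in Theorem 1 for consistent explicit methods) Let p ≥ 1, let A be a p×p complex matrix with A^p = 0, and let b ∈ ℂ^p with bᵀ𝟙 = Σᵢ bᵢ ≠ 0. Then for every nonzero h ∈ ℝ and every λ ∈ ℂ there exists α ∈ ℂ such that I − hαA is invertible and 1 + hα·bᵀ(I − hαA)⁻¹𝟙 = e^{hλ}; that is, the learnability equation of the method always has a solution. -/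
/-!
For nilpotent `A` the Neumann series of `(I - zA)⁻¹` terminates, so the stability function
`R(z) = 1 + z bᵀ(I - zA)⁻¹𝟙` of an explicit method is a polynomial in `z`, namely
`1 + ∑_{k<p} (bᵀAᵏ𝟙) z^{k+1}`. Its linear coefficient is `bᵀ𝟙 ≠ 0`, so it is nonconstant and,
`ℂ` being algebraically closed, takes every value, in particular `e^{hλ}`; then `α = z / h`.
-/

open Matrix Polynomial Finset

namespace Matrix

variable {n R : Type*} [Fintype n] [DecidableEq n] [CommRing R]

theorem inv_one_sub_eq_geom_sum {N : Matrix n n R} {p : ℕ} (hN : N ^ p = 0) :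
    (1 - N)⁻¹ = ∑ k ∈ range p, N ^ k :=
  inv_eq_right_inv (by rw [mul_neg_geom_sum, hN, sub_zero])

/-- The stability function `z ↦ 1 + z bᵀ(I - zA)⁻¹𝟙` of the Runge–Kutta method `(A, b)`, written
as a polynomial under the assumption `A ^ p = 0`. -/
noncomputable def stabilityPolynomial (A : Matrix n n R) (b : n → R) (p : ℕ) : R[X] :=
  1 + ∑ k ∈ range p, C (b ⬝ᵥ (A ^ k *ᵥ fun _ => 1)) * X ^ (k + 1)

theorem eval_stabilityPolynomial {A : Matrix n n R} {p : ℕ} (hA : A ^ p = 0) (b : n → R) (z : R) :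
    (stabilityPolynomial A b p).eval z = 1 + z * (b ⬝ᵥ ((1 - z • A)⁻¹ *ᵥ fun _ => 1)) := by
  have hzA : (z • A) ^ p = 0 := by rw [_root_.smul_pow, hA, smul_zero]
  rw [inv_one_sub_eq_geom_sum hzA, sum_mulVec, dotProduct_sum, mul_sum]
  simp only [stabilityPolynomial, eval_add, eval_one, eval_finsetSum, eval_mul, eval_C,
    eval_pow, eval_X, _root_.smul_pow, smul_mulVec, dotProduct_smul, smul_eq_mul]
  congr 1
  refine sum_congr rfl fun k _ => ?_
  ring

theorem coeff_one_stabilityPolynomial (A : Matrix n n R) (b : n → R) {p : ℕ} (hp : 0 < p) :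
    (stabilityPolynomial A b p).coeff 1 = ∑ i, b i := by
  simp only [stabilityPolynomial, coeff_add, coeff_one, finsetSum_coeff, coeff_C_mul,
    coeff_X_pow, mul_ite, mul_one, mul_zero]
  simp [hp, dotProduct]

end Matrix

/-- existence of a solution in Theorem 1 for consistent explicit methods:
if `A^p = 0` and `bᵀ𝟙 = ∑ᵢ bᵢ ≠ 0`, then for every nonzero `h ∈ ℝ` and every `λ ∈ ℂ`
there exists `α ∈ ℂ` with `I − h α A` invertible and
`1 + h α bᵀ (I − h α A)⁻¹ 𝟙 = e^{hλ}`; i.e. the learnability equation always has a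
solution. -/
theorem rk_learnability_equation_has_solution
    (p : ℕ) (hp : 1 ≤ p) (A : Matrix (Fin p) (Fin p) ℂ) (hA : A ^ p = 0)
    (b : Fin p → ℂ) (hb : ∑ i, b i ≠ 0) :
    ∀ (h : ℝ), h ≠ 0 → ∀ lam : ℂ,
      ∃ α : ℂ,
        IsUnit ((1 : Matrix (Fin p) (Fin p) ℂ) - ((h : ℂ) * α) • A).det
        ∧ 1 + (h : ℂ) * α *
            (b ⬝ᵥ ((1 : Matrix (Fin p) (Fin p) ℂ) - ((h : ℂ) * α) • A)⁻¹.mulVec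
              (fun _ : Fin p => (1 : ℂ)))
          = Complex.exp ((h : ℂ) * lam) := by
  intro h hh lam
  have hdeg : (stabilityPolynomial A b p).natDegree ≠ 0 :=
    Nat.pos_iff_ne_zero.mp <| le_natDegree_of_ne_zero <| by
      rwa [coeff_one_stabilityPolynomial A b hp]
  obtain ⟨z, hz⟩ := IsAlgClosed.eval_surjective hdeg (Complex.exp (h * lam))
  have hhz : (h : ℂ) * (z / h) = z := mul_div_cancel₀ z (Complex.ofReal_ne_zero.mpr hh)
  refine ⟨z / h, ?_, ?_⟩ <;> rw [hhz]
  · have hnil : IsNilpotent (z • A) := ⟨p, by rw [_root_.smul_pow, hA, smul_zero]⟩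
    exact (isUnit_iff_isUnit_det _).mp hnil.isUnit_one_sub
  · rw [← eval_stabilityPolynomial hA]
    exact hz
end
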